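/- (Gaussian elimination) Let A and B be ℤ-graded objects in an additive category, and let C be a cochain complex whose degree-n object is Aⁿ ⊕ Bⁿ, with differential having matrix components a : Aⁿ → Aⁿ⁺¹, b : Bⁿ → Aⁿ⁺¹, c : Aⁿ → Bⁿ⁺¹ and e : Bⁿ → Bⁿ⁺¹. Assume e ∘ e = 0 and that the complex (B, e) is contractible, with a null-homotopy h satisfying e∘h + h∘e = id_B and h∘h = 0. Then a − b∘h∘c is a differential on A (its square is zero), and the maps π = (id_A, −b∘h), σ = (id_A; −h∘c) and H = (0, 0; 0, h) constitute the data of a deformation retract from C onto the cochain complex A' = (A, a − b∘h∘c). -/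

import Mathlib

/-!
Reading compositions diagrammatically, the four entries of `d ≫ d = 0` for the matrix
differential `(a, b; c, e)` are `a ≫ a + c ≫ b = 0`, `a ≫ c + c ≫ e = 0`, `b ≫ a + e ≫ b = 0`
and `b ≫ c + e ≫ e = 0`; with `e ≫ e = 0` the last one says `b ≫ c = 0`. Checked entrywise on
the biproducts, each identity demanded of the perturbed differential and of the retract data is
a combination of these entries and of `h ≫ e + e ≫ h - 𝟙 = 0`, while `σ ≫ π = 𝟙`, `H ≫ π = 0`
and `σ ≫ H = 0` only need `h ≫ h = 0`.
-/

open CategoryTheory CategoryTheory.Limits CochainComplex CochainComplex.HomComplex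

/-- The data of a deformation retract from a `ℤ`-indexed cochain complex `M` onto a cochain
complex `N`: chain maps `π : M ⟶ N` and `σ : N ⟶ M` together with a degree `-1` graded map
`H` on `M` such that `π ∘ σ = id`, `id_M - σ ∘ π = d ∘ H + H ∘ d`, `π ∘ H = 0` and
`H ∘ σ = 0`. -/
structure DeformationRetract {C : Type*} [Category C] [Preadditive C]
    (M N : CochainComplex C ℤ) where
  π : M ⟶ N
  σ : N ⟶ M
  H : Cochain M M (-1)
  retract : σ ≫ π = 𝟙 N
  homotopy : δ (-1) 0 H = Cochain.ofHom (𝟙 M) - Cochain.ofHom (π ≫ σ)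
  H_π : H.comp (Cochain.ofHom π) (add_zero (-1)) = 0
  σ_H : (Cochain.ofHom σ).comp H (zero_add (-1)) = 0

/-- The degree `+1` map on the graded object `n ↦ Aⁿ ⊞ Bⁿ` given in matrix form by
`(a, b; c, e)`. -/
noncomputable def gaussD {C : Type*} [Category C] [Preadditive C] [HasBinaryBiproducts C]
    (A B : ℤ → C) (a : ∀ n, A n ⟶ A (n + 1)) (b : ∀ n, B n ⟶ A (n + 1))
    (c : ∀ n, A n ⟶ B (n + 1)) (e : ∀ n, B n ⟶ B (n + 1)) (n : ℤ) :
    A n ⊞ B n ⟶ A (n + 1) ⊞ B (n + 1) :=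
  biprod.desc (biprod.lift (a n) (c n)) (biprod.lift (b n) (e n))

section Reindex

/- Cochain components are indexed by pairs `(p, q)` with `q + 1 = p` and chain maps by all `p`,
while `h` and `b` are indexed by `n` with source `B (n + 1)`; `p = (p - 1) + 1` is not a
definitional equality, hence the `eqToHom` transports. -/

variable {C : Type*} [Category C] {X Y : ℤ → C}

def predHom (f : ∀ n, X (n + 1) ⟶ Y n) (p q : ℤ) (hqp : q + 1 = p) : X p ⟶ Y q :=
  eqToHom (congrArg X hqp.symm) ≫ f q

@[simp]
lemma predHom_succ (f : ∀ n, X (n + 1) ⟶ Y n) (q : ℤ) (hqp : q + 1 = q + 1) :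
    predHom f (q + 1) q hqp = f q := by
  simp [predHom]

def shiftHom (f : ∀ n, X (n + 1) ⟶ Y (n + 1)) (p : ℤ) : X p ⟶ Y p :=
  eqToHom (congrArg X (Int.sub_add_cancel p 1).symm) ≫ f (p - 1) ≫
    eqToHom (congrArg Y (Int.sub_add_cancel p 1))

@[simp]
lemma shiftHom_succ (f : ∀ n, X (n + 1) ⟶ Y (n + 1)) (n : ℤ) : shiftHom f (n + 1) = f n := by
  rw [shiftHom, eqToHom_naturality (g := fun k => Y (k + 1)) f (add_sub_cancel_right n 1)]
  simp

end Reindex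

section

variable {C : Type*} [Category C] [Preadditive C] [HasBinaryBiproducts C]
  {A B : ℤ → C} {a : ∀ n, A n ⟶ A (n + 1)} {b : ∀ n, B n ⟶ A (n + 1)}
  {c : ∀ n, A n ⟶ B (n + 1)} {e : ∀ n, B n ⟶ B (n + 1)} {h : ∀ n, B (n + 1) ⟶ B n}

lemma gaussD_comp_gaussD_eq_zero_iff (n : ℤ) :
    gaussD A B a b c e n ≫ gaussD A B a b c e (n + 1) = 0 ↔
      a n ≫ a (n + 1) + c n ≫ b (n + 1) = 0 ∧ a n ≫ c (n + 1) + c n ≫ e (n + 1) = 0 ∧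
      b n ≫ a (n + 1) + e n ≫ b (n + 1) = 0 ∧ b n ≫ c (n + 1) + e n ≫ e (n + 1) = 0 := by
  constructor
  · intro hd
    refine ⟨?_, ?_, ?_, ?_⟩
    · simpa [gaussD] using congrArg (biprod.inl ≫ · ≫ biprod.fst) hd
    · simpa [gaussD] using congrArg (biprod.inl ≫ · ≫ biprod.snd) hd
    · simpa [gaussD] using congrArg (biprod.inr ≫ · ≫ biprod.fst) hd
    · simpa [gaussD] using congrArg (biprod.inr ≫ · ≫ biprod.snd) hd
  · rintro ⟨hAA, hAB, hBA, hBB⟩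
    ext <;> simp [gaussD, *]

namespace GaussianElimination

lemma b_comp_c_eq_zero (hd : ∀ n, gaussD A B a b c e n ≫ gaussD A B a b c e (n + 1) = 0)
    (hee : ∀ n, e n ≫ e (n + 1) = 0) (n : ℤ) : b n ≫ c (n + 1) = 0 := by
  obtain ⟨-, -, -, hBB⟩ := (gaussD_comp_gaussD_eq_zero_iff n).mp (hd n)
  rwa [hee, add_zero] at hBB

lemma perturbed_d_comp_d (hd : ∀ n, gaussD A B a b c e n ≫ gaussD A B a b c e (n + 1) = 0)
    (hee : ∀ n, e n ≫ e (n + 1) = 0)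
    (hnull : ∀ n, h n ≫ e n + e (n + 1) ≫ h (n + 1) = 𝟙 (B (n + 1))) (n : ℤ) :
    (a n - c n ≫ h n ≫ b n) ≫ (a (n + 1) - c (n + 1) ≫ h (n + 1) ≫ b (n + 1)) = 0 := by
  obtain ⟨hAA, hAB, hBA, -⟩ := (gaussD_comp_gaussD_eq_zero_iff n).mp (hd n)
  calc
    _ = (a n ≫ a (n + 1) + c n ≫ b (n + 1)) - (a n ≫ c (n + 1) + c n ≫ e (n + 1)) ≫
          h (n + 1) ≫ b (n + 1) - c n ≫ h n ≫ (b n ≫ a (n + 1) + e n ≫ b (n + 1)) +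
        c n ≫ h n ≫ (b n ≫ c (n + 1)) ≫ h (n + 1) ≫ b (n + 1) +
        c n ≫ (h n ≫ e n + e (n + 1) ≫ h (n + 1) - 𝟙 _) ≫ b (n + 1) := by
      simp only [Preadditive.comp_add, Preadditive.add_comp, Preadditive.comp_sub,
        Preadditive.sub_comp, Category.assoc, Category.id_comp]
      abel
    _ = 0 := by
      rw [hAA, hAB, hBA, b_comp_c_eq_zero hd hee, hnull]
      simp

lemma retraction_comm_d (hd : ∀ n, gaussD A B a b c e n ≫ gaussD A B a b c e (n + 1) = 0)
    (hee : ∀ n, e n ≫ e (n + 1) = 0)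
    (hnull : ∀ n, h n ≫ e n + e (n + 1) ≫ h (n + 1) = 𝟙 (B (n + 1))) (n : ℤ) :
    biprod.desc (𝟙 _) (-(h n ≫ b n)) ≫ (a (n + 1) - c (n + 1) ≫ h (n + 1) ≫ b (n + 1)) =
      gaussD A B a b c e (n + 1) ≫ biprod.desc (𝟙 _) (-(h (n + 1) ≫ b (n + 1))) := by
  obtain ⟨-, -, hBA, -⟩ := (gaussD_comp_gaussD_eq_zero_iff n).mp (hd n)
  apply biprod.hom_ext'
  · simp [gaussD, sub_eq_add_neg]
  · simp only [gaussD, biprod.inr_desc_assoc, biprod.lift_desc]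
    rw [← sub_eq_zero]
    calc
      _ = -(h n ≫ (b n ≫ a (n + 1) + e n ≫ b (n + 1))) +
          h n ≫ (b n ≫ c (n + 1)) ≫ h (n + 1) ≫ b (n + 1) +
          (h n ≫ e n + e (n + 1) ≫ h (n + 1) - 𝟙 _) ≫ b (n + 1) := by
        simp only [Preadditive.comp_add, Preadditive.add_comp, Preadditive.comp_sub,
          Preadditive.sub_comp, Preadditive.neg_comp, Preadditive.comp_neg, Category.assoc,
          Category.id_comp, Category.comp_id]
        abel
      _ = 0 := by
        rw [hBA, b_comp_c_eq_zero hd hee, hnull]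
        simp

lemma inclusion_comm_d (hd : ∀ n, gaussD A B a b c e n ≫ gaussD A B a b c e (n + 1) = 0)
    (hee : ∀ n, e n ≫ e (n + 1) = 0)
    (hnull : ∀ n, h n ≫ e n + e (n + 1) ≫ h (n + 1) = 𝟙 (B (n + 1))) (n : ℤ) :
    biprod.lift (𝟙 _) (-(c n ≫ h n)) ≫ gaussD A B a b c e n =
      (a n - c n ≫ h n ≫ b n) ≫ biprod.lift (𝟙 _) (-(c (n + 1) ≫ h (n + 1))) := by
  obtain ⟨-, hAB, -, -⟩ := (gaussD_comp_gaussD_eq_zero_iff n).mp (hd n)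
  apply biprod.hom_ext
  · simp [gaussD, sub_eq_add_neg]
  · simp only [gaussD, biprod.lift_desc, Category.assoc, biprod.lift_snd]
    rw [← sub_eq_zero]
    calc
      _ = (a n ≫ c (n + 1) + c n ≫ e (n + 1)) ≫ h (n + 1) -
          c n ≫ h n ≫ (b n ≫ c (n + 1)) ≫ h (n + 1) -
          c n ≫ (h n ≫ e n + e (n + 1) ≫ h (n + 1) - 𝟙 _) := by
        simp only [Preadditive.comp_add, Preadditive.add_comp, Preadditive.comp_sub,
          Preadditive.sub_comp, Preadditive.neg_comp, Preadditive.comp_neg, Category.assoc,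
          Category.comp_id, Category.id_comp, biprod.lift_snd]
        abel
      _ = 0 := by
        rw [hAB, b_comp_c_eq_zero hd hee, hnull]
        simp

lemma homotopy_formula (hd : ∀ n, gaussD A B a b c e n ≫ gaussD A B a b c e (n + 1) = 0)
    (hee : ∀ n, e n ≫ e (n + 1) = 0)
    (hnull : ∀ n, h n ≫ e n + e (n + 1) ≫ h (n + 1) = 𝟙 (B (n + 1))) (n : ℤ) :
    (biprod.snd ≫ h n ≫ biprod.inr) ≫ gaussD A B a b c e n +
      gaussD A B a b c e (n + 1) ≫ biprod.snd ≫ h (n + 1) ≫ biprod.inr =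
      𝟙 _ - biprod.desc (𝟙 _) (-(h n ≫ b n)) ≫ biprod.lift (𝟙 _) (-(c (n + 1) ≫ h (n + 1))) := by
  have hbch : h n ≫ b n ≫ c (n + 1) ≫ h (n + 1) = 0 := by
    rw [reassoc_of% b_comp_c_eq_zero hd hee n, zero_comp, comp_zero]
  apply biprod.hom_ext' <;> apply biprod.hom_ext
  all_goals simp [gaussD, hbch, hnull]

noncomputable def deformationRetract
    (hd : ∀ n, gaussD A B a b c e n ≫ gaussD A B a b c e (n + 1) = 0)
    (hee : ∀ n, e n ≫ e (n + 1) = 0)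
    (hnull : ∀ n, h n ≫ e n + e (n + 1) ≫ h (n + 1) = 𝟙 (B (n + 1)))
    (hhh : ∀ n, h (n + 1) ≫ h n = 0) :
    DeformationRetract (CochainComplex.of (fun n => A n ⊞ B n) (gaussD A B a b c e) hd)
      (CochainComplex.of A (fun n => a n - c n ≫ h n ≫ b n)
        (perturbed_d_comp_d hd hee hnull)) where
  π := CochainComplex.ofHom
    (fun p => biprod.desc (𝟙 _) (-shiftHom (fun n => h n ≫ b n) p)) (fun p => by
      obtain ⟨n, rfl⟩ : ∃ n, p = n + 1 := ⟨p - 1, by omega⟩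
      simpa using retraction_comm_d hd hee hnull n)
  σ := CochainComplex.ofHom (fun p => biprod.lift (𝟙 _) (-(c p ≫ h p)))
    (fun p => by simpa using inclusion_comm_d hd hee hnull p)
  H := Cochain.mk fun p q hpq => biprod.snd ≫ predHom h p q (by omega) ≫ biprod.inr
  retract := by
    ext p : 1
    obtain ⟨n, rfl⟩ : ∃ n, p = n + 1 := ⟨p - 1, by omega⟩
    simp [reassoc_of% hhh n]
  homotopy := by
    ext p : 1
    obtain ⟨n, rfl⟩ : ∃ n, p = n + 1 := ⟨p - 1, by omega⟩
    rw [δ_v (-1) 0 (by omega) _ (n + 1) (n + 1) (by omega) n (n + 1 + 1) (by omega) rfl]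
    simpa using homotopy_formula hd hee hnull n
  H_π := by
    ext p q hpq : 1
    obtain ⟨n, rfl⟩ : ∃ n, q = n + 1 := ⟨q - 1, by omega⟩
    obtain rfl : p = n + 1 + 1 := by omega
    simp [reassoc_of% hhh n]
  σ_H := by
    ext p q hpq : 1
    obtain rfl : p = q + 1 := by omega
    simp [reassoc_of% hhh q]

end GaussianElimination

end

theorem gaussian_elimination
    {C : Type*} [Category C] [Preadditive C] [HasBinaryBiproducts C]
    (A B : ℤ → C) (a : ∀ n, A n ⟶ A (n + 1)) (b : ∀ n, B n ⟶ A (n + 1))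
    (c : ∀ n, A n ⟶ B (n + 1)) (e : ∀ n, B n ⟶ B (n + 1))
    (h : ∀ n, B (n + 1) ⟶ B n)
    (sqM : ∀ n, gaussD A B a b c e n ≫ gaussD A B a b c e (n + 1) = 0)
    (hee : ∀ n, e n ≫ e (n + 1) = 0)
    (hnull : ∀ n, h n ≫ e n + e (n + 1) ≫ h (n + 1) = 𝟙 (B (n + 1)))
    (hhh : ∀ n, h (n + 1) ≫ h n = 0) :
    (∀ n, (a n - c n ≫ h n ≫ b n) ≫ (a (n + 1) - c (n + 1) ≫ h (n + 1) ≫ b (n + 1)) = 0) ∧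
    (∀ sqN : ∀ n, (a n - c n ≫ h n ≫ b n) ≫
        (a (n + 1) - c (n + 1) ≫ h (n + 1) ≫ b (n + 1)) = 0,
      ∃ ret : DeformationRetract
          (CochainComplex.of (fun n => A n ⊞ B n) (gaussD A B a b c e) sqM)
          (CochainComplex.of A (fun n => a n - c n ≫ h n ≫ b n) sqN),
        (∀ n, ret.π.f (n + 1) = biprod.desc (𝟙 (A (n + 1))) (-(h n ≫ b n))) ∧
        (∀ n, ret.σ.f n = biprod.lift (𝟙 (A n)) (-(c n ≫ h n))) ∧
        (∀ n, ret.H.v (n + 1) n (by omega) = biprod.snd ≫ h n ≫ biprod.inr)) := by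
  refine ⟨GaussianElimination.perturbed_d_comp_d sqM hee hnull, fun _ =>
    ⟨GaussianElimination.deformationRetract sqM hee hnull hhh, fun n => ?_, fun _ => rfl,
      fun n => ?_⟩⟩
  all_goals simp [GaussianElimination.deformationRetract]
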